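/- arXiv:math/0404118 — 2 statements merged into one kernel-verified Lean document; each statement's English description precedes it below -/
import Mathlib

section
/- Let G be a group with finite relative presentation ⟨X, H_λ (λ∈Λ) | 𝓡⟩ with respect to {H_λ}_{λ∈Λ}, let Q ≤ G be a subgroup generated by a finite set Y ⊆ X, and let 𝓠, F_Q, γ, Area^rel_Q, and primitive words be as defined. If there exists a constant κ > 0 such that every primitive word W over 𝓠 representing 1 in G satisfies Area^rel_Q(W) ≤ κ‖W‖, then every word W over 𝓠 representing 1 in G satisfies Area^rel_Q(W) ≤ κ‖W‖; in particular, the relative Dehn function of G with respect to {H_λ}_{λ∈Λ} ∪ {Q} is linear. -/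
open Monoid

section RelHypPreamble

variable {G : Type*} [Group G] {ι : Type*}

/-- The alphabet `X ∪ 𝓗`, where `𝓗 = ⊔_λ (H_λ ∖ {1})`. -/
def RelAlphabet (X : Set G) (H : ι → Subgroup G) : Type _ :=
  X ⊕ (Σ i : ι, {h : G // h ∈ H i ∧ h ≠ 1})

/-- The free product `F = (∗_λ H_λ) ∗ F(X)`. -/
abbrev RelFree (X : Set G) (H : ι → Subgroup G) : Type _ :=
  Monoid.Coprod (Monoid.CoprodI (fun i : ι => (H i : Type _))) (FreeGroup X)

/-- The natural homomorphism `F → G`. -/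
noncomputable def relEval (X : Set G) (H : ι → Subgroup G) : RelFree X H →* G :=
  Coprod.lift (CoprodI.lift fun i => (H i).subtype) (FreeGroup.lift fun x => (x : G))

/-- The letter of the alphabet, viewed as an element of `G`. -/
def RelAlphabet.toG {X : Set G} {H : ι → Subgroup G} : RelAlphabet X H → G
  | Sum.inl x => x
  | Sum.inr h => h.2.1

/-- The letter of the alphabet, viewed as an element of the free product `F`. -/
def RelAlphabet.toFree {X : Set G} {H : ι → Subgroup G} : RelAlphabet X H → RelFree X H
  | Sum.inl x => Coprod.inr (FreeGroup.of x)
  | Sum.inr h => Coprod.inl (CoprodI.of (⟨h.2.1, h.2.2.1⟩ : H h.1))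

/-- A word over the alphabet `X ∪ 𝓗`, viewed as an element of the free product `F`. -/
def wordToFree {X : Set G} {H : ι → Subgroup G} (W : List (RelAlphabet X H)) : RelFree X H :=
  (W.map RelAlphabet.toFree).prod

/-- `w` is a product of (at most) `k` conjugates of elements of `R`. -/
def ConjProdLE {K : Type*} [Group K] (R : Set K) (w : K) (k : ℕ) : Prop :=
  ∃ f r : Fin k → K, (∀ i, r i ∈ R) ∧ w = (List.ofFn fun i => (f i)⁻¹ * r i * f i).prod

/-- The relative Dehn function of the presentation with relators `R` is (well defined and)
bounded by a linear function. -/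
def HasLinearRelDehn (X : Set G) (H : ι → Subgroup G) (R : Set (RelFree X H)) : Prop :=
  ∃ C : ℕ, ∀ W : List (RelAlphabet X H), relEval X H (wordToFree W) = 1 →
    ∃ k ≤ C * W.length + C, ConjProdLE R (wordToFree W) k

/-- `G` is hyperbolic relative to `{H_λ}` with finite relative generating set `X`:
`X` is a finite symmetrized relative generating set, and there is a finite set of
relators `R` giving a finite relative presentation whose relative Dehn function is
well defined and linear. -/
def IsRelHyperbolicWith (X : Set G) (H : ι → Subgroup G) : Prop :=
  X.Finite ∧ (∀ x ∈ X, x⁻¹ ∈ X) ∧ Function.Surjective (relEval X H) ∧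
    ∃ R : Set (RelFree X H), R.Finite ∧ (relEval X H).ker = Subgroup.normalClosure R ∧
      HasLinearRelDehn X H R

/-- `G` is hyperbolic relative to the collection of subgroups `{H_λ}`. -/
def IsRelHyperbolic (H : ι → Subgroup G) : Prop :=
  ∃ X : Set G, IsRelHyperbolicWith X H

/-- The word length of `g` with respect to the (symmetrized) generating set `S`. -/
noncomputable def wordLength (S : Set G) (g : G) : ℕ :=
  sInf {n : ℕ | ∃ W : List G, W.length = n ∧ (∀ x ∈ W, x ∈ S ∪ S⁻¹) ∧ W.prod = g}

/-- The relative generating set `X ∪ 𝓗` as a subset of `G`. -/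
def relGenSet (X : Set G) (H : ι → Subgroup G) : Set G :=
  X ∪ ⋃ i : ι, ((H i : Set G) \ {1})

/-- An element is parabolic if it is conjugate to an element of some `H_λ`. -/
def IsParabolic (H : ι → Subgroup G) (g : G) : Prop :=
  ∃ (i : ι) (a : G), a⁻¹ * g * a ∈ H i

/-- A group is elementary if it contains a cyclic subgroup of finite index. -/
def IsElementaryGroup (K : Type*) [Group K] : Prop :=
  ∃ k : K, (Subgroup.zpowers k).FiniteIndex

end RelHypPreamble

section Stmt10

open Monoid Classical

variable {G : Type*} [Group G] {ι : Type*}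

/-- The free product `F_Q = (∗_λ H_λ) ∗ Q ∗ F(Z)`, where `Z = X ∖ Y`. -/
abbrev RelFreeQ (X Y : Set G) (H : ι → Subgroup G) (Q : Subgroup G) : Type _ :=
  Monoid.Coprod (Monoid.Coprod (Monoid.CoprodI (fun i : ι => (H i : Type _))) Q)
    (FreeGroup ((X \ Y : Set G)))

/-- The natural homomorphism `γ : F_Q → G`. -/
noncomputable def relEvalQ (X Y : Set G) (H : ι → Subgroup G) (Q : Subgroup G) :
    RelFreeQ X Y H Q →* G :=
  Coprod.lift
    (Coprod.lift (CoprodI.lift fun i => (H i).subtype) Q.subtype)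
    (FreeGroup.lift fun z => (z : G))

/-- The natural homomorphism `ε : F → F_Q`. -/
noncomputable def epsQ (X Y : Set G) (H : ι → Subgroup G) (Q : Subgroup G)
    (hYQ : Y ⊆ (Q : Set G)) : RelFree X H →* RelFreeQ X Y H Q :=
  Coprod.lift
    (Coprod.inl.comp Coprod.inl)
    (FreeGroup.lift fun x : X =>
      (if hx : (x : G) ∈ Y then Coprod.inl (Coprod.inr (⟨(x : G), hYQ hx⟩ : Q))
       else Coprod.inr (FreeGroup.of (⟨(x : G), x.2, hx⟩ : (X \ Y : Set G)))
        : RelFreeQ X Y H Q))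

/-- The alphabet `𝓠 = X ∪ 𝓗 ⊔ (Q ∖ {1})`. -/
abbrev QAlphabet (X : Set G) (H : ι → Subgroup G) (Q : Subgroup G) : Type _ :=
  RelAlphabet X H ⊕ {q : G // q ∈ Q ∧ q ≠ 1}

/-- A letter of `𝓠`, viewed as an element of `F_Q` (letters of `Y ⊆ X` are read as
elements of `Q`, the remaining letters of `X` as free generators of `F(Z)`). -/
noncomputable def QAlphabet.toFQ {X : Set G} (Y : Set G) {H : ι → Subgroup G}
    {Q : Subgroup G} (hYQ : Y ⊆ (Q : Set G)) : QAlphabet X H Q → RelFreeQ X Y H Q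
  | Sum.inl (Sum.inl x) =>
      if hx : (x : G) ∈ Y then Coprod.inl (Coprod.inr (⟨(x : G), hYQ hx⟩ : Q))
      else Coprod.inr (FreeGroup.of (⟨(x : G), x.2, hx⟩ : (X \ Y : Set G)))
  | Sum.inl (Sum.inr h) =>
      Coprod.inl (Coprod.inl
        (CoprodI.of (M := fun i : ι => (H i : Type _)) (⟨h.2.1, h.2.2.1⟩ : H h.1)))
  | Sum.inr q => Coprod.inl (Coprod.inr (⟨q.1, q.2.1⟩ : Q))

/-- A letter of `𝓠`, viewed as an element of `G`. -/
def QAlphabet.toG {X : Set G} {H : ι → Subgroup G} {Q : Subgroup G} :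
    QAlphabet X H Q → G
  | Sum.inl l => l.toG
  | Sum.inr q => q.1

/-- A word over `𝓠`, viewed as an element of `F_Q`. -/
noncomputable def wordToFQ {X : Set G} (Y : Set G) {H : ι → Subgroup G} {Q : Subgroup G}
    (hYQ : Y ⊆ (Q : Set G)) (W : List (QAlphabet X H Q)) : RelFreeQ X Y H Q :=
  (W.map (QAlphabet.toFQ Y hYQ)).prod

/-- A word `W` over `𝓠` is primitive if it cannot be decomposed as `W₁q₁W₂q₂W₃` with
`q₁, q₂ ∈ Q ∖ {1}` and `W₂` representing an element of `Q` in `G`. -/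
def IsPrimitiveWord {X : Set G} {H : ι → Subgroup G} {Q : Subgroup G}
    (W : List (QAlphabet X H Q)) : Prop :=
  ¬ ∃ (W₁ W₂ W₃ : List (QAlphabet X H Q)) (q₁ q₂ : {q : G // q ∈ Q ∧ q ≠ 1}),
      W = W₁ ++ [(Sum.inr q₁ : QAlphabet X H Q)] ++ W₂ ++ [(Sum.inr q₂ : QAlphabet X H Q)] ++ W₃ ∧
      (W₂.map QAlphabet.toG).prod ∈ Q

/-!
A non-primitive relation `W ≡ W₁q₁W₂q₂W₃` with `W₂ =_G q ∈ Q` is, in `F_Q`, a conjugate of the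
relation `W₂q⁻¹` times the relation `W₁(q₁qq₂)W₃`; both are shorter than `W` and their lengths add
up to at most `‖W‖`, so induction on `‖W‖` spreads the bound `κ‖W‖` from primitive words to all
words.

For `{H_λ} ∪ {Q}` keep the generating set `X`, so that `F' = (∗_λ H_λ ∗ Q) ∗ F(X)`. The map
`π : F' → F_Q` reading the letters of `Y` in `Q` has a section `σ`, and its kernel is normally
generated by the relators `q_y⁻¹y` (`y ∈ Y`, `q_y` the letter `y` of `Q`). Hence `σ(ε(𝓡))` together
with these relators presents `G`, and a relation `w` of `F'` of length `n` splits as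
`σ(π w) · (σ(π w))⁻¹w`, where the first factor needs at most `κn` relators of `σ(ε(𝓡))` and the
second at most `n` relators `q_y⁻¹y`.
-/

section ConjugateProducts

variable {K K' : Type*} [Group K] [Group K'] {R R' : Set K} {v w : K} {k l : ℕ}

theorem conjProdLE_iff_exists_list : ConjProdLE R w k ↔
    ∃ L : List K, L.length = k ∧ (∀ x ∈ L, ∃ g, ∃ r ∈ R, x = g⁻¹ * r * g) ∧ w = L.prod := by
  constructor
  · rintro ⟨f, r, hr, rfl⟩
    refine ⟨_, List.length_ofFn, fun x hx => ?_, rfl⟩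
    obtain ⟨i, rfl⟩ := List.mem_ofFn.mp hx
    exact ⟨f i, r i, hr i, rfl⟩
  · rintro ⟨L, rfl, hL, rfl⟩
    choose f r hr hfr using fun i : Fin L.length => hL L[i] (List.getElem_mem _)
    exact ⟨f, r, hr, by simp only [← hfr]; exact congrArg List.prod List.ofFn_getElem.symm⟩

namespace ConjProdLE

theorem one : ConjProdLE R 1 0 :=
  conjProdLE_iff_exists_list.mpr ⟨[], rfl, by simp, rfl⟩

theorem of_mem {r : K} (g : K) (hr : r ∈ R) : ConjProdLE R (g⁻¹ * r * g) 1 :=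
  conjProdLE_iff_exists_list.mpr ⟨[g⁻¹ * r * g], rfl, by simpa using ⟨g, r, hr, rfl⟩, by simp⟩

theorem mul (hv : ConjProdLE R v k) (hw : ConjProdLE R w l) : ConjProdLE R (v * w) (k + l) := by
  obtain ⟨L₁, rfl, hL₁, rfl⟩ := conjProdLE_iff_exists_list.mp hv
  obtain ⟨L₂, rfl, hL₂, rfl⟩ := conjProdLE_iff_exists_list.mp hw
  refine conjProdLE_iff_exists_list.mpr ⟨L₁ ++ L₂, List.length_append, ?_, List.prod_append.symm⟩
  simpa only [List.mem_append, or_imp, forall_and] using ⟨hL₁, hL₂⟩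

theorem mono (hRR' : R ⊆ R') (hw : ConjProdLE R w k) : ConjProdLE R' w k :=
  let ⟨f, r, hr, hw⟩ := hw
  ⟨f, r, fun i => hRR' (hr i), hw⟩

theorem map (φ : K →* K') (hw : ConjProdLE R w k) : ConjProdLE (φ '' R) (φ w) k := by
  obtain ⟨f, r, hr, rfl⟩ := hw
  refine ⟨fun i => φ (f i), fun i => φ (r i), fun i => Set.mem_image_of_mem φ (hr i), ?_⟩
  simp [map_list_prod, List.map_ofFn, Function.comp_def]

theorem conj (g : K) (hw : ConjProdLE R w k) : ConjProdLE R (g * w * g⁻¹) k := by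
  obtain ⟨f, r, hr, rfl⟩ := hw
  refine ⟨fun i => f i * g⁻¹, r, hr, ?_⟩
  rw [← MulAut.conj_apply, map_list_prod, List.map_ofFn]
  congr 2 with i
  simp only [Function.comp_apply, MulAut.conj_apply]
  group

end ConjProdLE

theorem exists_conjProdLE_inv_map_mul_prod (φ : K →* K) (L : List K)
    (hL : ∀ x ∈ L, φ x = x ∨ (φ x)⁻¹ * x ∈ R) :
    ∃ m ≤ L.length, ConjProdLE R ((φ L.prod)⁻¹ * L.prod) m := by
  induction L with
  | nil => exact ⟨0, le_rfl, by simpa using ConjProdLE.one⟩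
  | cons x L ih =>
    obtain ⟨m, hm, hL'⟩ := ih fun y hy => hL y (List.mem_cons_of_mem x hy)
    have hsplit : (φ (x :: L).prod)⁻¹ * (x :: L).prod =
        (φ L.prod)⁻¹ * ((φ x)⁻¹ * x) * φ L.prod * ((φ L.prod)⁻¹ * L.prod) := by
      simp only [List.prod_cons, map_mul]
      group
    rw [hsplit]
    rcases hL x List.mem_cons_self with hx | hx
    · exact ⟨m, by simp only [List.length_cons]; omega, by simpa [hx] using hL'⟩
    · exact ⟨1 + m, by simp only [List.length_cons]; omega, (ConjProdLE.of_mem _ hx).mul hL'⟩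

end ConjugateProducts

section NormalClosure

variable {A B C : Type*} [Group A] [Group B] [Group C]

theorem MonoidHom.ker_eq_normalClosure_image {ε : A →* B} (hε : Function.Surjective ε)
    {γ : B →* C} {R : Set A} (h : (γ.comp ε).ker = Subgroup.normalClosure R) :
    γ.ker = Subgroup.normalClosure (ε '' R) := by
  rw [← Subgroup.map_normalClosure R ε hε, ← h, ← MonoidHom.comap_ker,
    Subgroup.map_comap_eq_self_of_surjective hε]

theorem MonoidHom.ker_comp_eq_normalClosure {π : A →* B} {σ : B →* A}
    (hπσ : ∀ b, π (σ b) = b) {T : Set A} (hπ : π.ker = Subgroup.normalClosure T)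
    {γ : B →* C} {S : Set B} (hγ : γ.ker = Subgroup.normalClosure S) :
    (γ.comp π).ker = Subgroup.normalClosure (σ '' S ∪ T) := by
  apply le_antisymm
  · intro a ha
    have hσ : σ (π a) ∈ Subgroup.normalClosure (σ '' S) :=
      Subgroup.map_normalClosure_le S σ ⟨π a, hγ ▸ ha, rfl⟩
    have hrest : (σ (π a))⁻¹ * a ∈ Subgroup.normalClosure T := by
      rw [← hπ, MonoidHom.mem_ker, map_mul, map_inv, hπσ, inv_mul_cancel]
    rw [← mul_inv_cancel_left (σ (π a)) a]
    exact mul_mem (Subgroup.normalClosure_mono Set.subset_union_left hσ)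
      (Subgroup.normalClosure_mono Set.subset_union_right hrest)
  · refine Subgroup.normalClosure_le_normal (Set.union_subset ?_ fun t ht => ?_)
    · rintro _ ⟨s, hs, rfl⟩
      have hs' : s ∈ γ.ker := hγ ▸ Subgroup.subset_normalClosure hs
      simpa [hπσ] using hs'
    · have ht' : t ∈ π.ker := by rw [hπ]; exact Subgroup.subset_normalClosure ht
      simp [MonoidHom.mem_ker.mp ht']

end NormalClosure

theorem mul_mul_mul_mul_eq_conj_mul {K : Type*} [Group K] (a b c x y q : K) :
    a * x * b * y * c = a * x * (b * q⁻¹) * (a * x)⁻¹ * (a * (x * q * y) * c) := by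
  group

section Words

variable {X Y : Set G} {H : ι → Subgroup G} {Q : Subgroup G} (hYQ : Y ⊆ (Q : Set G))

@[simp]
theorem wordToFQ_append (V W : List (QAlphabet X H Q)) :
    wordToFQ Y hYQ (V ++ W) = wordToFQ Y hYQ V * wordToFQ Y hYQ W := by
  simp [wordToFQ]

@[simp]
theorem wordToFQ_singleton (l : QAlphabet X H Q) :
    wordToFQ Y hYQ [l] = QAlphabet.toFQ Y hYQ l := by
  simp [wordToFQ]

@[simp]
theorem relEvalQ_inl_inr (q : Q) :
    relEvalQ X Y H Q (Coprod.inl (Coprod.inr q)) = q := by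
  simp [relEvalQ]

theorem relEvalQ_toFQ (l : QAlphabet X H Q) :
    relEvalQ X Y H Q (QAlphabet.toFQ Y hYQ l) = l.toG := by
  rcases l with (x | h) | q
  · by_cases hx : (x : G) ∈ Y <;>
      simp [QAlphabet.toFQ, relEvalQ, hx, QAlphabet.toG, RelAlphabet.toG]
  · simp [QAlphabet.toFQ, relEvalQ, QAlphabet.toG, RelAlphabet.toG]
  · simp [QAlphabet.toFQ, QAlphabet.toG]

theorem relEvalQ_wordToFQ (W : List (QAlphabet X H Q)) :
    relEvalQ X Y H Q (wordToFQ Y hYQ W) = (W.map QAlphabet.toG).prod := by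
  simp [wordToFQ, map_list_prod, relEvalQ_toFQ, Function.comp_def]

theorem exists_wordToFQ_eq_mul (W : List (QAlphabet X H Q)) (q : Q) :
    ∃ V : List (QAlphabet X H Q), V.length ≤ W.length + 1 ∧
      wordToFQ Y hYQ V = wordToFQ Y hYQ W * Coprod.inl (Coprod.inr q) := by
  by_cases hq : q = 1
  · exact ⟨W, W.length.le_succ, by simp [hq]⟩
  · refine ⟨W ++ [Sum.inr ⟨q, q.2, by simpa using hq⟩], by simp, ?_⟩
    simp [QAlphabet.toFQ]

theorem exists_conj_mul_of_not_isPrimitiveWord {W : List (QAlphabet X H Q)}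
    (hW : ¬ IsPrimitiveWord W) :
    ∃ (V W' : List (QAlphabet X H Q)) (c : RelFreeQ X Y H Q),
      V.length < W.length ∧ W'.length < W.length ∧ V.length + W'.length ≤ W.length ∧
      relEvalQ X Y H Q (wordToFQ Y hYQ V) = 1 ∧
      relEvalQ X Y H Q (wordToFQ Y hYQ W') = relEvalQ X Y H Q (wordToFQ Y hYQ W) ∧
      wordToFQ Y hYQ W = c * wordToFQ Y hYQ V * c⁻¹ * wordToFQ Y hYQ W' := by
  obtain ⟨W₁, W₂, W₃, q₁, q₂, rfl, hW₂⟩ := not_not.mp hW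
  set q : Q := ⟨_, hW₂⟩
  obtain ⟨V, hV, hVval⟩ := exists_wordToFQ_eq_mul hYQ W₂ q⁻¹
  obtain ⟨W₁', hW₁', hW₁'val⟩ :=
    exists_wordToFQ_eq_mul hYQ W₁ (⟨q₁.1, q₁.2.1⟩ * q * ⟨q₂.1, q₂.2.1⟩)
  have hlen : (W₁ ++ [Sum.inr q₁] ++ W₂ ++ [Sum.inr q₂] ++ W₃).length =
      W₁.length + W₂.length + W₃.length + 2 := by
    simp only [List.length_append, List.length_singleton]
    omega
  refine ⟨V, W₁' ++ W₃, wordToFQ Y hYQ W₁ * Coprod.inl (Coprod.inr ⟨q₁.1, q₁.2.1⟩),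
    by omega, by rw [List.length_append]; omega, by rw [List.length_append]; omega, ?_, ?_, ?_⟩
  · rw [hVval, map_mul, relEvalQ_wordToFQ]
    simp [q]
  · simp only [wordToFQ_append, wordToFQ_singleton, hW₁'val, map_mul, relEvalQ_wordToFQ,
      relEvalQ_toFQ, relEvalQ_inl_inr]
    simp [QAlphabet.toG, q, mul_assoc]
  · simp only [wordToFQ_append, wordToFQ_singleton, hVval, hW₁'val, map_mul, map_inv,
      QAlphabet.toFQ]
    -- `group` does not see through the instances of the nested coproduct `RelFreeQ`.
    exact mul_mul_mul_mul_eq_conj_mul (K := RelFreeQ X Y H Q) _ _ _ _ _ _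

theorem area_le_of_primitive_area_le {κ : ℝ} (hκ : 0 ≤ κ) {S : Set (RelFreeQ X Y H Q)}
    (hprim : ∀ W : List (QAlphabet X H Q), IsPrimitiveWord W →
      relEvalQ X Y H Q (wordToFQ Y hYQ W) = 1 →
      ∃ k : ℕ, (k : ℝ) ≤ κ * W.length ∧ ConjProdLE S (wordToFQ Y hYQ W) k)
    (W : List (QAlphabet X H Q)) (hW : relEvalQ X Y H Q (wordToFQ Y hYQ W) = 1) :
    ∃ k : ℕ, (k : ℝ) ≤ κ * W.length ∧ ConjProdLE S (wordToFQ Y hYQ W) k := by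
  induction hn : W.length using Nat.strong_induction_on generalizing W with
  | _ n ih =>
    subst hn
    by_cases hprimW : IsPrimitiveWord W
    · exact hprim W hprimW hW
    obtain ⟨V, W', c, hV, hW', hlen, hV1, hW'1, hsplit⟩ :=
      exists_conj_mul_of_not_isPrimitiveWord hYQ hprimW
    obtain ⟨k, hk, hkV⟩ := ih _ hV V hV1 rfl
    obtain ⟨k', hk', hkW'⟩ := ih _ hW' W' (hW'1.trans hW) rfl
    refine ⟨k + k', ?_, hsplit ▸ (hkV.conj c).mul hkW'⟩
    calc ((k + k' : ℕ) : ℝ) ≤ κ * V.length + κ * W'.length := by push_cast; linarith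
      _ ≤ κ * W.length := by rw [← mul_add]; gcongr; exact_mod_cast hlen

end Words

section EpsQ

variable {X Y : Set G} {H : ι → Subgroup G} {Q : Subgroup G} (hYQ : Y ⊆ (Q : Set G))

@[simp]
theorem relEval_inr_of {ι' : Type*} {K : ι' → Subgroup G} (x : X) :
    relEval X K (Coprod.inr (FreeGroup.of x)) = x := by
  simp [relEval]

@[simp]
theorem epsQ_inl (m : CoprodI fun i => (H i : Type _)) :
    epsQ X Y H Q hYQ (Coprod.inl m) = Coprod.inl (Coprod.inl m) := by
  simp [epsQ]

theorem epsQ_inr_of_of_mem {x : X} (hx : (x : G) ∈ Y) :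
    epsQ X Y H Q hYQ (Coprod.inr (FreeGroup.of x)) = Coprod.inl (Coprod.inr ⟨x, hYQ hx⟩) := by
  simp [epsQ, hx]

theorem epsQ_inr_of_of_notMem {x : X} (hx : (x : G) ∉ Y) :
    epsQ X Y H Q hYQ (Coprod.inr (FreeGroup.of x)) = Coprod.inr (FreeGroup.of ⟨x, x.2, hx⟩) := by
  simp [epsQ, hx]

theorem relEvalQ_comp_epsQ : (relEvalQ X Y H Q).comp (epsQ X Y H Q hYQ) = relEval X H := by
  refine Coprod.hom_ext (CoprodI.ext_hom _ _ fun i => ?_) (FreeGroup.ext_hom _ _ fun x => ?_)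
  · ext h
    rfl
  · by_cases hx : (x : G) ∈ Y
    · simp [epsQ_inr_of_of_mem hYQ hx]
    · simp [epsQ_inr_of_of_notMem hYQ hx, relEvalQ]

theorem epsQ_surjective (hYX : Y ⊆ X) (hQgen : Subgroup.closure Y = Q) :
    Function.Surjective (epsQ X Y H Q hYQ) := by
  subst hQgen
  set E : Subgroup (RelFreeQ X Y H (Subgroup.closure Y)) := (epsQ X Y H _ hYQ).range
  have hQ : E.comap (Coprod.inl.comp Coprod.inr) = ⊤ := by
    rw [eq_top_iff, ← Subgroup.closure_closure_coe_preimage, Subgroup.closure_le]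
    intro q hq
    exact ⟨Coprod.inr (FreeGroup.of ⟨q, hYX hq⟩), epsQ_inr_of_of_mem hYQ (x := ⟨q, hYX hq⟩) hq⟩
  have hZ : E.comap Coprod.inr = ⊤ := by
    rw [eq_top_iff, ← FreeGroup.closure_range_of, Subgroup.closure_le]
    rintro _ ⟨z, rfl⟩
    exact ⟨Coprod.inr (FreeGroup.of ⟨z, z.2.1⟩),
      epsQ_inr_of_of_notMem hYQ (x := ⟨z, z.2.1⟩) z.2.2⟩
  intro w
  suffices hw : w ∈ E from hw
  induction w using Coprod.induction_on with
  | inl m =>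
    induction m using Coprod.induction_on with
    | inl m => exact ⟨Coprod.inl m, epsQ_inl hYQ m⟩
    | inr q => exact (Subgroup.eq_top_iff' _).mp hQ q
    | mul x y hx hy => simpa using mul_mem hx hy
  | inr u => exact (Subgroup.eq_top_iff' _).mp hZ u
  | mul x y hx hy => exact mul_mem hx hy

end EpsQ

section FamilyWithQ

variable {X Y : Set G} {H : ι → Subgroup G} {Q : Subgroup G}

/-- `{H_λ}_{λ∈Λ} ∪ {Q}`. -/
abbrev familyWithQ (H : ι → Subgroup G) (Q : Subgroup G) : Option ι → Subgroup G :=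
  fun o => o.elim Q H

noncomputable def factorToRelFreeQ (X Y : Set G) (H : ι → Subgroup G) (Q : Subgroup G) :
    ∀ o : Option ι, familyWithQ H Q o →* RelFreeQ X Y H Q
  | none => Coprod.inl.comp Coprod.inr
  | some i => Coprod.inl.comp (Coprod.inl.comp (CoprodI.of (M := fun i => H i) (i := i)))

/-- The map `π : (∗_λ H_λ ∗ Q) ∗ F(X) → F_Q` reading the letters of `Y` in `Q`. -/
noncomputable def mergeY (hYQ : Y ⊆ (Q : Set G)) :
    RelFree X (familyWithQ H Q) →* RelFreeQ X Y H Q :=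
  Coprod.lift (CoprodI.lift (factorToRelFreeQ X Y H Q)) ((epsQ X Y H Q hYQ).comp Coprod.inr)

/-- The section `σ` of `π`. -/
noncomputable def splitQ : RelFreeQ X Y H Q →* RelFree X (familyWithQ H Q) :=
  Coprod.lift
    (Coprod.lift
      (CoprodI.lift fun i =>
        Coprod.inl.comp (CoprodI.of (M := fun o => familyWithQ H Q o) (i := some i)))
      (Coprod.inl.comp (CoprodI.of (M := fun o => familyWithQ H Q o) (i := none))))
    (FreeGroup.lift fun z => Coprod.inr (FreeGroup.of ⟨z.1, z.2.1⟩))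

/-- The relators `q_y⁻¹y`, `y ∈ Y`. -/
def yToQRelators (hYX : Y ⊆ X) (hYQ : Y ⊆ (Q : Set G)) : Set (RelFree X (familyWithQ H Q)) :=
  Set.range fun y : Y =>
    (Coprod.inl (CoprodI.of (M := fun o => familyWithQ H Q o) (i := none) ⟨y, hYQ y.2⟩))⁻¹ *
      Coprod.inr (FreeGroup.of ⟨y, hYX y.2⟩)

def RelAlphabet.toQAlphabet : RelAlphabet X (familyWithQ H Q) → QAlphabet X H Q
  | Sum.inl x => Sum.inl (Sum.inl x)
  | Sum.inr ⟨none, h⟩ => Sum.inr h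
  | Sum.inr ⟨some i, h⟩ => Sum.inl (Sum.inr ⟨i, h⟩)

variable (hYQ : Y ⊆ (Q : Set G))

theorem mergeY_inr (w : FreeGroup X) :
    mergeY hYQ (Coprod.inr w : RelFree X (familyWithQ H Q)) = epsQ X Y H Q hYQ (Coprod.inr w) := by
  simp [mergeY]

@[simp]
theorem splitQ_inl_inr (q : Q) :
    splitQ (Coprod.inl (Coprod.inr q) : RelFreeQ X Y H Q) =
      Coprod.inl (CoprodI.of (M := fun o => familyWithQ H Q o) (i := none) q) := by
  simp only [splitQ, Coprod.lift_apply_inl, Coprod.lift_apply_inr]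
  rfl

@[simp]
theorem splitQ_inr_of (z : (X \ Y : Set G)) :
    splitQ (Coprod.inr (FreeGroup.of z) : RelFreeQ X Y H Q) =
      Coprod.inr (FreeGroup.of ⟨z.1, z.2.1⟩) := by
  simp [splitQ]

theorem relEvalQ_comp_mergeY :
    (relEvalQ X Y H Q).comp (mergeY hYQ) = relEval X (familyWithQ H Q) := by
  refine Coprod.hom_ext (CoprodI.ext_hom _ _ fun o => ?_) (FreeGroup.ext_hom _ _ fun x => ?_)
  · cases o <;> ext h <;> rfl
  · simpa [mergeY_inr] using
      DFunLike.congr_fun (relEvalQ_comp_epsQ hYQ) (Coprod.inr (FreeGroup.of x))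

theorem mergeY_splitQ (b : RelFreeQ X Y H Q) : mergeY hYQ (splitQ b) = b := by
  suffices h : (mergeY hYQ).comp splitQ = MonoidHom.id _ from DFunLike.congr_fun h b
  refine Coprod.hom_ext (Coprod.hom_ext (CoprodI.ext_hom _ _ fun i => ?_) ?_)
    (FreeGroup.ext_hom _ _ fun z => ?_)
  · ext h
    rfl
  · ext q
    rfl
  · simp only [MonoidHom.comp_apply, splitQ_inr_of, mergeY_inr, MonoidHom.id_apply]
    exact epsQ_inr_of_of_notMem hYQ (x := ⟨z.1, z.2.1⟩) z.2.2

theorem mergeY_wordToFree (W : List (RelAlphabet X (familyWithQ H Q))) :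
    mergeY hYQ (wordToFree W) = wordToFQ Y hYQ (W.map RelAlphabet.toQAlphabet) := by
  have hletter (l : RelAlphabet X (familyWithQ H Q)) :
      mergeY hYQ l.toFree = QAlphabet.toFQ Y hYQ l.toQAlphabet := by
    rcases l with x | ⟨_ | i, h⟩
    · simp [RelAlphabet.toFree, mergeY_inr, epsQ, QAlphabet.toFQ, RelAlphabet.toQAlphabet]
    all_goals rfl
  simp [wordToFree, wordToFQ, map_list_prod, hletter, Function.comp_def]

variable (hYX : Y ⊆ X)

theorem splitQ_mergeY_toFree (l : RelAlphabet X (familyWithQ H Q)) :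
    splitQ (mergeY hYQ l.toFree) = l.toFree ∨
      (splitQ (mergeY hYQ l.toFree))⁻¹ * l.toFree ∈ yToQRelators hYX hYQ := by
  rcases l with x | ⟨o, h⟩
  · by_cases hx : (x : G) ∈ Y
    · right
      rw [RelAlphabet.toFree, mergeY_inr, epsQ_inr_of_of_mem hYQ hx, splitQ_inl_inr]
      exact ⟨⟨x, hx⟩, rfl⟩
    · left
      rw [RelAlphabet.toFree, mergeY_inr, epsQ_inr_of_of_notMem hYQ hx, splitQ_inr_of]
  · left
    cases o <;> rfl

theorem ker_mergeY :
    (mergeY (H := H) hYQ).ker = Subgroup.normalClosure (yToQRelators hYX hYQ) := by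
  set N := Subgroup.normalClosure (yToQRelators (H := H) hYX hYQ)
  apply le_antisymm
  · have hmod : (QuotientGroup.mk' N).comp (splitQ.comp (mergeY hYQ)) = QuotientGroup.mk' N := by
      refine Coprod.hom_ext (CoprodI.ext_hom _ _ fun o => ?_) (FreeGroup.ext_hom _ _ fun x => ?_)
      · cases o <;> ext h <;> rfl
      · rcases splitQ_mergeY_toFree hYQ hYX (Sum.inl x) with h | h
        · exact congrArg (QuotientGroup.mk' N) h
        · exact QuotientGroup.eq.mpr (Subgroup.subset_normalClosure h)
    intro a ha
    have := DFunLike.congr_fun hmod a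
    rw [MonoidHom.comp_apply, MonoidHom.comp_apply, ha, map_one, map_one] at this
    exact (QuotientGroup.eq_one_iff a).mp this.symm
  · refine Subgroup.normalClosure_le_normal ?_
    rintro _ ⟨y, rfl⟩
    rw [SetLike.mem_coe, MonoidHom.mem_ker, map_mul, map_inv, inv_mul_eq_one, mergeY_inr,
      epsQ_inr_of_of_mem (X := X) (H := H) hYQ (x := ⟨y, hYX y.2⟩) y.2]
    rfl

theorem ker_relEval_familyWithQ {S : Set (RelFreeQ X Y H Q)}
    (hS : (relEvalQ X Y H Q).ker = Subgroup.normalClosure S) :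
    (relEval X (familyWithQ H Q)).ker =
      Subgroup.normalClosure (splitQ '' S ∪ yToQRelators hYX hYQ) := by
  rw [← relEvalQ_comp_mergeY hYQ]
  exact MonoidHom.ker_comp_eq_normalClosure (mergeY_splitQ hYQ) (ker_mergeY hYQ hYX) hS

theorem hasLinearRelDehn_familyWithQ {κ : ℝ} {S : Set (RelFreeQ X Y H Q)}
    (hArea : ∀ W : List (QAlphabet X H Q), relEvalQ X Y H Q (wordToFQ Y hYQ W) = 1 →
      ∃ k : ℕ, (k : ℝ) ≤ κ * W.length ∧ ConjProdLE S (wordToFQ Y hYQ W) k) :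
    HasLinearRelDehn X (familyWithQ H Q) (splitQ '' S ∪ yToQRelators hYX hYQ) := by
  refine ⟨⌈κ⌉₊ + 1, fun W hW => ?_⟩
  have hWQ : relEvalQ X Y H Q (wordToFQ Y hYQ (W.map RelAlphabet.toQAlphabet)) = 1 := by
    rw [← mergeY_wordToFree, ← MonoidHom.comp_apply, relEvalQ_comp_mergeY, hW]
  obtain ⟨k, hk, hkS⟩ := hArea _ hWQ
  rw [List.length_map] at hk
  obtain ⟨m, hm, hmT⟩ := exists_conjProdLE_inv_map_mul_prod (splitQ.comp (mergeY hYQ))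
    (W.map RelAlphabet.toFree) (by simpa using fun l _ => splitQ_mergeY_toFree hYQ hYX l)
  rw [List.length_map] at hm
  replace hmT : ConjProdLE (yToQRelators hYX hYQ)
      ((splitQ (mergeY hYQ (wordToFree W)))⁻¹ * wordToFree W) m := hmT
  have hkW : k ≤ ⌈κ⌉₊ * W.length := by
    have : (k : ℝ) ≤ ⌈κ⌉₊ * W.length := hk.trans (by gcongr; exact Nat.le_ceil κ)
    exact_mod_cast this
  refine ⟨k + m, by nlinarith, ?_⟩
  have hw := ((hkS.map splitQ).mono Set.subset_union_left).mul (hmT.mono Set.subset_union_right)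
  rwa [← mergeY_wordToFree, mul_inv_cancel_left] at hw

end FamilyWithQ

/-- **Lemma.** Let `G` have a finite relative presentation `⟨X, H_λ | 𝓡⟩` with respect
to `{H_λ}`, and let `Q ≤ G` be generated by a finite set `Y ⊆ X`. If there is `κ > 0`
such that every primitive word `W` over `𝓠` representing `1` in `G` satisfies
`Area^rel_Q(W) ≤ κ‖W‖`, then every word `W` over `𝓠` representing `1` in `G` satisfies
`Area^rel_Q(W) ≤ κ‖W‖`; in particular, the relative Dehn function of `G` with respect to
`{H_λ} ∪ {Q}` is linear, i.e. `G` is hyperbolic relative to `{H_λ} ∪ {Q}`. -/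
theorem area_bound_of_primitive_area_bound
    (H : ι → Subgroup G) (X : Set G) (hXfin : X.Finite)
    (hXsym : ∀ x ∈ X, x⁻¹ ∈ X) (hsur : Function.Surjective (relEval X H))
    (R : Set (RelFree X H)) (hRfin : R.Finite)
    (hker : (relEval X H).ker = Subgroup.normalClosure R)
    (Q : Subgroup G) (Y : Set G) (hYX : Y ⊆ X) (hYfin : Y.Finite)
    (hYQ : Y ⊆ (Q : Set G)) (hQgen : Subgroup.closure Y = Q)
    (κ : ℝ) (hκ : 0 < κ)
    (hprim : ∀ W : List (QAlphabet X H Q), IsPrimitiveWord W →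
      relEvalQ X Y H Q (wordToFQ Y hYQ W) = 1 →
      ∃ k : ℕ, (k : ℝ) ≤ κ * W.length ∧
        ConjProdLE (⇑(epsQ X Y H Q hYQ) '' R) (wordToFQ Y hYQ W) k) :
    (∀ W : List (QAlphabet X H Q),
      relEvalQ X Y H Q (wordToFQ Y hYQ W) = 1 →
      ∃ k : ℕ, (k : ℝ) ≤ κ * W.length ∧
        ConjProdLE (⇑(epsQ X Y H Q hYQ) '' R) (wordToFQ Y hYQ W) k) ∧
    IsRelHyperbolic (fun o : Option ι => o.elim Q H) := by
  have hArea := area_le_of_primitive_area_le hYQ hκ.le hprim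
  have hkerQ : (relEvalQ X Y H Q).ker = Subgroup.normalClosure (epsQ X Y H Q hYQ '' R) :=
    MonoidHom.ker_eq_normalClosure_image (epsQ_surjective hYQ hYX hQgen)
      (by rw [relEvalQ_comp_epsQ, hker])
  have hγ : Function.Surjective (relEvalQ X Y H Q) := by
    rw [← relEvalQ_comp_epsQ hYQ, MonoidHom.coe_comp] at hsur
    exact hsur.of_comp
  have := hYfin.to_subtype
  refine ⟨hArea, X, hXfin, hXsym, ?_, _, ((hRfin.image _).image _).union (Set.finite_range _),
    ker_relEval_familyWithQ hYQ hYX hkerQ, hasLinearRelDehn_familyWithQ hYQ hYX hArea⟩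
  rw [← relEvalQ_comp_mergeY hYQ]
  exact hγ.comp fun b => ⟨splitQ b, mergeY_splitQ hYQ b⟩

end Stmt10
end

section
/- Let G be a group with a finite relative presentation ⟨X, H_λ (λ∈Λ) | 𝓡⟩ with respect to a collection of subgroups {H_λ}_{λ∈Λ}, and suppose the index set Λ is infinite. Then there exists a finite subset Λ₀ ⊆ Λ such that, letting G₀ denote the subgroup of G generated by X together with all H_λ for λ ∈ Λ₀, the natural homomorphism from the free product G₀ ∗ (∗_{λ∈Λ∖Λ₀} H_λ) to G is an isomorphism. -/
open Monoid

/-! Each of the finitely many relators involves only finitely many of the factors `H_λ`; let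
`Λ₀` collect them. Sending `X` and the `H_λ`, `λ ∈ Λ₀`, into `G₀` and every other `H_λ` to its
own factor defines a surjection `F → G₀ ∗ (∗_{λ∉Λ₀} H_λ)` lifting `F → G`. It kills each
relator, because a relator lands in the factor `G₀`, which embeds in `G`. Hence it kills the
kernel of `F → G`, and the natural map `G₀ ∗ (∗_{λ∉Λ₀} H_λ) → G` is injective as well as
surjective. -/

namespace RelFree

variable {G : Type*} [Group G] {ι : Type*} (X : Set G) (H : ι → Subgroup G)

def supportedOn (s : Set ι) : Subgroup (RelFree X H) :=
  (Coprod.inr : FreeGroup X →* RelFree X H).range ⊔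
    ⨆ i ∈ s, ((Coprod.inl : _ →* RelFree X H).comp (CoprodI.of (i := i))).range

variable {X H}

theorem supportedOn_mono {s t : Set ι} (h : s ⊆ t) : supportedOn X H s ≤ supportedOn X H t :=
  sup_le_sup_left (biSup_mono h) _

variable (X H)

theorem iSup_supportedOn_finset : ⨆ s : Finset ι, supportedOn X H s = ⊤ := by
  have inr_le :
      (Coprod.inr : FreeGroup X →* RelFree X H).range ≤ ⨆ s : Finset ι, supportedOn X H s :=
    le_sup_left.trans (le_iSup (fun s : Finset ι => supportedOn X H s) ∅)
  have inl_le : (Coprod.inl : _ →* RelFree X H).range ≤ ⨆ s : Finset ι, supportedOn X H s := by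
    rw [← CoprodI.lift_comp_of' (Coprod.inl : _ →* RelFree X H)]
    exact CoprodI.lift_range_le _ _ fun i =>
      le_iSup_of_le {i} (le_sup_of_le_right (le_iSup₂_of_le i (by simp) le_rfl))
  rw [eq_top_iff, ← Coprod.range_inl_sup_range_inr]
  exact sup_le inl_le inr_le

theorem exists_finset_mem_supportedOn (f : RelFree X H) :
    ∃ s : Finset ι, f ∈ supportedOn X H s :=
  (Subgroup.mem_iSup_of_directed
    (Monotone.directed_le fun _ _ h => supportedOn_mono (Finset.coe_subset.2 h))).1
    ((iSup_supportedOn_finset X H).ge (Subgroup.mem_top f))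

theorem exists_finset_subset_supportedOn {R : Set (RelFree X H)} (hR : R.Finite) :
    ∃ s : Finset ι, R ⊆ supportedOn X H s := by
  choose s hs using fun r : R => exists_finset_mem_supportedOn X H r
  have := hR.to_subtype
  obtain ⟨t, ht⟩ := (Set.finite_range s).bddAbove
  exact ⟨t, fun r hr =>
    supportedOn_mono (Finset.coe_subset.2 (ht ⟨⟨r, hr⟩, rfl⟩)) (hs ⟨r, hr⟩)⟩

end RelFree

theorem MonoidHom.bijective_of_comp_eq {F P K : Type*} [Group F] [Group P] [Group K]
    {π : F →* K} {ψ : F →* P} {φ : P →* K} (hπ : Function.Surjective π)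
    (hψ : Function.Surjective ψ) (hφψ : φ.comp ψ = π) (hker : π.ker ≤ ψ.ker) :
    Function.Bijective φ := by
  refine ⟨(injective_iff_map_eq_one φ).2 fun p hp => ?_, ?_⟩
  · obtain ⟨f, rfl⟩ := hψ p
    exact hker (by rwa [← hφψ] at *)
  · exact Function.Surjective.of_comp (g := ψ) (by rwa [← MonoidHom.coe_comp, hφψ])

section SplitCoprod

variable {G : Type*} [Group G] {ι : Type*} (X : Set G) (H : ι → Subgroup G) (Λ : Set ι)

abbrev relGenSubgroup : Subgroup G :=
  Subgroup.closure (X ∪ ⋃ i ∈ Λ, (H i : Set G))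

abbrev RelSplitCoprod : Type _ :=
  Coprod (relGenSubgroup X H Λ) (CoprodI fun j : {j : ι // j ∉ Λ} => (H j.1 : Type _))

noncomputable def relSplitEval : RelSplitCoprod X H Λ →* G :=
  Coprod.lift (relGenSubgroup X H Λ).subtype (CoprodI.lift fun j => (H j.1).subtype)

variable {X H Λ}

theorem le_relGenSubgroup {i : ι} (hi : i ∈ Λ) : H i ≤ relGenSubgroup X H Λ :=
  fun _ hg => Subgroup.subset_closure (Or.inr (Set.mem_biUnion hi hg))

variable (X H Λ)

open Classical in
noncomputable def relSplitOf (i : ι) : H i →* RelSplitCoprod X H Λ :=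
  if hi : i ∈ Λ then Coprod.inl.comp (Subgroup.inclusion (le_relGenSubgroup hi))
  else Coprod.inr.comp
    (CoprodI.of (M := fun j : {j : ι // j ∉ Λ} => (H j.1 : Type _)) (i := ⟨i, hi⟩))

noncomputable def relFreeToSplit : RelFree X H →* RelSplitCoprod X H Λ :=
  Coprod.lift (CoprodI.lift (relSplitOf X H Λ))
    (Coprod.inl.comp (FreeGroup.lift fun x => ⟨x, Subgroup.subset_closure (Or.inl x.2)⟩))

theorem relSplitEval_comp_relFreeToSplit :
    (relSplitEval X H Λ).comp (relFreeToSplit X H Λ) = relEval X H := by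
  refine Coprod.hom_ext (CoprodI.ext_hom _ _ fun i => ?_) (FreeGroup.ext_hom _ _ fun x => ?_)
  · ext h
    by_cases hi : i ∈ Λ <;> simp [relSplitEval, relFreeToSplit, relSplitOf, relEval, hi]
  · simp [relSplitEval, relFreeToSplit, relEval]

theorem relFreeToSplit_surjective : Function.Surjective (relFreeToSplit X H Λ) := by
  rw [← MonoidHom.range_eq_top, eq_top_iff, ← Coprod.range_inl_sup_range_inr]
  refine sup_le ?_ ?_
  · rw [MonoidHom.range_eq_map, ← Subgroup.closure_closure_coe_preimage, MonoidHom.map_closure,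
      Subgroup.closure_le]
    rintro _ ⟨⟨g, _⟩, hg | hg, rfl⟩
    · exact ⟨Coprod.inr (FreeGroup.of ⟨g, hg⟩), by simp [relFreeToSplit]⟩
    · obtain ⟨i, hi, hgi⟩ : ∃ i ∈ Λ, g ∈ H i := by simpa using hg
      refine ⟨Coprod.inl (CoprodI.of (⟨g, hgi⟩ : H i)), ?_⟩
      simp [relFreeToSplit, relSplitOf, hi]
      rfl
  · rw [← CoprodI.lift_comp_of' (Coprod.inr : CoprodI _ →* RelSplitCoprod X H Λ)]
    refine CoprodI.lift_range_le _ _ fun j => ?_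
    rintro _ ⟨h, rfl⟩
    exact ⟨Coprod.inl (CoprodI.of h), by simp [relFreeToSplit, relSplitOf, j.2]⟩

theorem supportedOn_le_comap_range_inl :
    RelFree.supportedOn X H Λ ≤
      (Coprod.inl : relGenSubgroup X H Λ →* RelSplitCoprod X H Λ).range.comap
        (relFreeToSplit X H Λ) := by
  refine sup_le ?_ (iSup₂_le fun i hi => ?_)
  · rintro _ ⟨w, rfl⟩
    simp [relFreeToSplit]
  · rintro _ ⟨h, rfl⟩
    exact ⟨Subgroup.inclusion (le_relGenSubgroup hi) h, by simp [relFreeToSplit, relSplitOf, hi]⟩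

theorem relSplitEval_bijective (hsur : Function.Surjective (relEval X H))
    {R : Set (RelFree X H)} (hker : (relEval X H).ker = Subgroup.normalClosure R)
    (hR : R ⊆ RelFree.supportedOn X H Λ) : Function.Bijective (relSplitEval X H Λ) := by
  refine MonoidHom.bijective_of_comp_eq hsur (relFreeToSplit_surjective X H Λ)
    (relSplitEval_comp_relFreeToSplit X H Λ) ?_
  rw [hker]
  refine Subgroup.normalClosure_le_normal fun r hr => ?_
  obtain ⟨g, hg⟩ := supportedOn_le_comap_range_inl X H Λ (hR hr)
  have hg1 : g = 1 := by
    have hr1 : relEval X H r = 1 := hker.ge (Subgroup.subset_normalClosure hr)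
    rw [← relSplitEval_comp_relFreeToSplit X H Λ, MonoidHom.comp_apply, ← hg] at hr1
    exact Subtype.ext (by simpa [relSplitEval] using hr1)
  rw [SetLike.mem_coe, MonoidHom.mem_ker, ← hg, hg1, map_one]

end SplitCoprod

theorem free_product_decomposition_general {G : Type*} [Group G] {ι : Type*}
    (H : ι → Subgroup G) (X : Set G)
    (hsur : Function.Surjective (relEval X H))
    (R : Set (RelFree X H)) (hRfin : R.Finite)
    (hker : (relEval X H).ker = Subgroup.normalClosure R) :
    ∃ Λ₀ : Set ι, Λ₀.Finite ∧
      Function.Bijective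
        (Monoid.Coprod.lift
          (Subgroup.closure (X ∪ ⋃ i ∈ Λ₀, (H i : Set G))).subtype
          (Monoid.CoprodI.lift
            (fun j : {j : ι // j ∉ Λ₀} => (H j.1).subtype))) := by
  obtain ⟨s, hs⟩ := RelFree.exists_finset_subset_supportedOn X H hRfin
  exact ⟨s, s.finite_toSet, relSplitEval_bijective X H s hsur hker hs⟩

/-- **Lemma.** Let `G` have a finite relative presentation `⟨X, H_λ (λ∈Λ) | 𝓡⟩` with
respect to `{H_λ}`, with the index set `Λ` infinite. Then there exists a finite subset
`Λ₀ ⊆ Λ` such that, letting `G₀` be the subgroup of `G` generated by `X` together with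
all `H_λ`, `λ ∈ Λ₀`, the natural homomorphism `G₀ ∗ (∗_{λ∈Λ∖Λ₀} H_λ) → G` is an
isomorphism. -/
theorem free_product_decomposition {G : Type*} [Group G] {ι : Type*} [Infinite ι]
    (H : ι → Subgroup G) (X : Set G) (hXfin : X.Finite)
    (hsur : Function.Surjective (relEval X H))
    (R : Set (RelFree X H)) (hRfin : R.Finite)
    (hker : (relEval X H).ker = Subgroup.normalClosure R) :
    ∃ Λ₀ : Set ι, Λ₀.Finite ∧
      Function.Bijective
        (Monoid.Coprod.lift
          (Subgroup.closure (X ∪ ⋃ i ∈ Λ₀, (H i : Set G))).subtype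
          (Monoid.CoprodI.lift
            (fun j : {j : ι // j ∉ Λ₀} => (H j.1).subtype))) :=
  free_product_decomposition_general H X hsur R hRfin hker
end
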